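/- Let n ≥ 4 and let m ≥ 0. The number of pairs (S, T), where S = (A_1 ⊊ ⋯ ⊊ A_α) is a strictly increasing chain of subsets of an (n-2)-element set X and T = (A'_1 ⊊ ⋯ ⊊ A'_β) is a strictly increasing chain of subsets of X with (A'_1, A'_β) ≠ (∅, X), with α + β = k and α, β ≥ 0, equals Σ_{α=0}^{k} B_α·C_{k-α}, where B_α = Surj(n-2,α-1) + 2·Surj(n-2,α) + Surj(n-2,α+1) and C_β = 2·Surj(n-2,β) + Surj(n-2,β+1) (Surj(n-2,j) = 0 for j < 0). This is the number f_{k-1} of (k-1)-dimensional faces of the unimodular triangulation of Cut(K_{2,n-2}) induced by the quadratic Gröbner basis, i.e., the number of squarefree standard monomials of degree k. -/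

import Mathlib

/-!
A strict chain `S 0 ⊊ ⋯ ⊊ S (a-1)` of subsets of `X` is determined by its level function
`g : X → {0, …, a}`, where `g x` is the first index `i` with `x ∈ S i` (or `a` if there is none),
through `S i = {x | g x ≤ i}`; strictness says exactly that `g` takes every interior value
`1, …, a-1`. Sorting these functions by which of the two end values `0` and `a` they take gives
`Surj(a-1) + 2·Surj(a) + Surj(a+1)` chains. The condition `(S 0, S (a-1)) ≠ (∅, X)` says that
`g` takes `0` or `a`, which removes the summand `Surj(a-1)`.
-/

/-- The number of surjective functions from an `m`-element set onto a `k`-element set. -/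
noncomputable def Surj (m k : ℕ) : ℕ := Nat.card {f : Fin m → Fin k // Function.Surjective f}

open Finset

section Counting

variable {β : Type*} [DecidableEq β] (m : ℕ)

theorem card_fun_image_eq (K : Finset β) :
    Nat.card {g : Fin m → β // univ.image g = K} = Surj m #K := by
  let toSurj : {g : Fin m → β // univ.image g = K} ≃ {h : Fin m → K // Function.Surjective h} :=
    { toFun g := ⟨fun x => ⟨g.1 x, g.2.subset (mem_image_of_mem _ (mem_univ x))⟩,
        fun b => by
          obtain ⟨x, -, hx⟩ := mem_image.mp (g.2.symm.subset b.2)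
          exact ⟨x, Subtype.ext hx⟩⟩
      invFun h := ⟨fun x => h.1 x, by
        ext b
        refine ⟨fun hb => ?_, fun hb => ?_⟩
        · obtain ⟨x, -, rfl⟩ := mem_image.mp hb
          exact (h.1 x).2
        · obtain ⟨x, hx⟩ := h.2 ⟨b, hb⟩
          exact mem_image.mpr ⟨x, mem_univ x, congrArg Subtype.val hx⟩⟩
      left_inv _ := rfl
      right_inv _ := rfl }
  rw [Nat.card_congr toSurj, Surj]
  exact Nat.card_congr <| (Equiv.arrowCongr (Equiv.refl _) K.equivFin).subtypeEquiv
    fun h => (Equiv.comp_surjective h K.equivFin).symm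

theorem card_fun_subset_image [Fintype β] (I : Finset β) :
    Nat.card {g : Fin m → β // I ⊆ univ.image g}
      = ∑ j ∈ range (#Iᶜ + 1), (#Iᶜ).choose j * Surj m (#I + j) := by
  have sum_powerset := sum_powerset_apply_card (fun j => Surj m (#I + j)) (x := Iᶜ)
  simp only [smul_eq_mul] at sum_powerset
  rw [← sum_powerset, Nat.card_eq_fintype_card, Fintype.card_subtype,
    card_eq_sum_card_fiberwise (f := fun g => univ.image g \ I) (t := Iᶜ.powerset)
      fun g _ => by simp]
  refine sum_congr rfl fun E hE => ?_
  have hIE : Disjoint I E := subset_compl_iff_disjoint_left.mp (mem_powerset.mp hE)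
  rw [← card_union_of_disjoint hIE, ← card_fun_image_eq, Nat.card_eq_fintype_card,
    Fintype.card_subtype, filter_filter]
  refine congrArg card (filter_congr fun g _ => ⟨fun ⟨hI, hE⟩ => ?_, fun h => ?_⟩)
  · rw [← hE, union_sdiff_of_subset hI]
  · rw [h]
    exact ⟨subset_union_left, by rw [union_sdiff_left, sdiff_eq_self_of_disjoint hIE.symm]⟩

end Counting

theorem Fin.eq_of_forall_le_castSucc_iff {n : ℕ} {u v : Fin (n + 1)}
    (h : ∀ i : Fin n, u ≤ i.castSucc ↔ v ≤ i.castSucc) : u = v := by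
  have le_of_iff (u v : Fin (n + 1)) (huv : ∀ i : Fin n, u ≤ i.castSucc ↔ v ≤ i.castSucc) :
      u ≤ v := by
    by_contra! hvu
    obtain ⟨i, rfl⟩ := Fin.exists_castSucc_eq.mpr (hvu.trans_le (Fin.le_last u)).ne
    exact hvu.not_ge ((huv i).mpr le_rfl)
  exact le_antisymm (le_of_iff u v h) (le_of_iff v u fun i => (h i).symm)

section Chains

variable {α : Type*} {a : ℕ}

section

variable [DecidableEq α]

/-- For monotone `S`, the number of sets missing `x` is the first index of a set containing `x`. -/
def chainLevel (S : Fin a → Finset α) (x : α) : Fin (a + 1) :=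
  ⟨#{i | x ∉ S i}, Nat.lt_succ_of_le ((card_le_univ _).trans_eq (Fintype.card_fin a))⟩

theorem chainLevel_le_castSucc_iff {S : Fin a → Finset α} (hS : Monotone S) {x : α}
    {i : Fin a} : chainLevel S x ≤ i.castSucc ↔ x ∈ S i := by
  rw [Fin.le_def, Fin.val_castSucc]
  refine ⟨fun hle => ?_, fun hx => ?_⟩
  · by_contra hx
    have : Iic i ⊆ ({j | x ∉ S j} : Finset (Fin a)) := fun j hj => by
      simpa using fun hxj => hx (hS (mem_Iic.mp hj) hxj)
    have := card_le_card this
    rw [Fin.card_Iic] at this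
    exact absurd hle (by simp only [chainLevel]; omega)
  · have : ({j | x ∉ S j} : Finset (Fin a)) ⊆ Iio i := fun j hj => by
      simp only [mem_filter, mem_univ, true_and] at hj
      exact mem_Iio.mpr (lt_of_not_ge fun hij => hj (hS hij hx))
    simpa [chainLevel] using (card_le_card this).trans_eq (Fin.card_Iio i)

end

variable [Fintype α]

def sublevelChain (g : α → Fin (a + 1)) (i : Fin a) : Finset α :=
  {x | g x ≤ i.castSucc}

@[simp]
theorem mem_sublevelChain {g : α → Fin (a + 1)} {i : Fin a} {x : α} :
    x ∈ sublevelChain g i ↔ g x ≤ i.castSucc := by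
  simp [sublevelChain]

theorem sublevelChain_injective : Function.Injective (sublevelChain (α := α) (a := a)) :=
  fun g g' h => funext fun x => Fin.eq_of_forall_le_castSucc_iff fun i => by
    rw [← mem_sublevelChain, ← mem_sublevelChain, h]

theorem sublevelChain_strictMono {g : α → Fin (a + 1)}
    (hg : ({0, Fin.last a}ᶜ : Finset (Fin (a + 1))) ⊆ univ.image g) :
    StrictMono (sublevelChain g) := by
  refine fun i j hij => Finset.ssubset_iff_subset_ne.mpr ⟨fun x hx => ?_, fun heq => ?_⟩
  · simp only [mem_sublevelChain] at hx ⊢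
    exact hx.trans (Fin.castSucc_le_castSucc_iff.mpr hij.le)
  · have hsucc : i.succ ≤ j.castSucc := Fin.succ_le_castSucc_iff.mpr hij
    obtain ⟨x, -, hx⟩ := mem_image.mp <| hg <| by
      simpa using ⟨Fin.succ_ne_zero i, (hsucc.trans_lt (Fin.castSucc_lt_last j)).ne⟩
    have hxj : x ∈ sublevelChain g j := by simpa [hx] using hsucc
    rw [← heq, mem_sublevelChain, hx] at hxj
    exact Fin.castSucc_lt_succ.not_ge hxj

theorem sublevelChain_zero_eq_empty_iff {b : ℕ} {g : α → Fin (b + 2)} :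
    sublevelChain g 0 = ∅ ↔ 0 ∉ univ.image g := by
  simp [Finset.eq_empty_iff_forall_notMem]

theorem sublevelChain_last_eq_univ_iff {b : ℕ} {g : α → Fin (b + 2)} :
    sublevelChain g (Fin.last b) = univ ↔ Fin.last (b + 1) ∉ univ.image g := by
  simp [Finset.eq_univ_iff_forall, Fin.le_castSucc_iff, Fin.lt_last_iff_ne_last]

theorem image_eq_compl_iff {b : ℕ} {g : α → Fin (b + 2)}
    (hg : ({0, Fin.last (b + 1)}ᶜ : Finset (Fin (b + 2))) ⊆ univ.image g) :
    univ.image g = {0, Fin.last (b + 1)}ᶜ ↔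
      sublevelChain g 0 = ∅ ∧ sublevelChain g (Fin.last b) = univ := by
  rw [← hg.ge_iff_eq', subset_compl_iff_disjoint_right, disjoint_insert_right,
    disjoint_singleton_right, sublevelChain_zero_eq_empty_iff, sublevelChain_last_eq_univ_iff]

variable [DecidableEq α]

theorem sublevelChain_chainLevel {S : Fin a → Finset α} (hS : Monotone S) :
    sublevelChain (chainLevel S) = S :=
  funext fun i => Finset.ext fun x => by rw [mem_sublevelChain, chainLevel_le_castSucc_iff hS]

theorem compl_subset_image_chainLevel {S : Fin a → Finset α} (hS : StrictMono S) :
    ({0, Fin.last a}ᶜ : Finset (Fin (a + 1))) ⊆ univ.image (chainLevel S) := by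
  intro v hv
  simp only [mem_compl, mem_insert, mem_singleton, not_or] at hv
  obtain ⟨i, rfl⟩ := Fin.exists_succ_eq.mpr hv.1
  obtain ⟨j, hj⟩ := Fin.exists_castSucc_eq.mpr hv.2
  have hij : i < j := Fin.castSucc_lt_castSucc_iff.mp (hj ▸ Fin.castSucc_lt_succ)
  obtain ⟨x, hxj, hxi⟩ := exists_of_ssubset (hS hij)
  refine mem_image.mpr ⟨x, mem_univ x, le_antisymm ?_ ?_⟩
  · exact hj ▸ (chainLevel_le_castSucc_iff hS.monotone).mpr hxj
  · exact Fin.castSucc_lt_iff_succ_le.mp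
      (lt_of_not_ge ((chainLevel_le_castSucc_iff hS.monotone).not.mpr hxi))

theorem image_chainLevel_eq_compl_iff {b : ℕ} {S : Fin (b + 1) → Finset α} (hS : StrictMono S) :
    univ.image (chainLevel S) = {0, Fin.last (b + 1)}ᶜ ↔ S 0 = ∅ ∧ S (Fin.last b) = univ := by
  have := image_eq_compl_iff (compl_subset_image_chainLevel hS)
  rwa [sublevelChain_chainLevel hS.monotone] at this

variable (α a) in
def chainEquivLevel :
    {S : Fin a → Finset α // StrictMono S} ≃
      {g : α → Fin (a + 1) // ({0, Fin.last a}ᶜ : Finset (Fin (a + 1))) ⊆ univ.image g} where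
  toFun S := ⟨chainLevel S.1, compl_subset_image_chainLevel S.2⟩
  invFun g := ⟨sublevelChain g.1, sublevelChain_strictMono g.2⟩
  left_inv S := Subtype.ext (sublevelChain_chainLevel S.2.monotone)
  right_inv g := Subtype.ext <| sublevelChain_injective <|
    sublevelChain_chainLevel (sublevelChain_strictMono g.2).monotone

end Chains

theorem surj_zero {m : ℕ} (hm : 0 < m) : Surj m 0 = 0 := by
  have : IsEmpty (Fin m → Fin 0) := ⟨fun f => (f ⟨0, hm⟩).elim0⟩
  simp [Surj]

theorem card_strictMono_chains {m : ℕ} (hm : 0 < m) (a : ℕ) :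
    Nat.card {S : Fin a → Finset (Fin m) // StrictMono S}
      = (if a = 0 then 0 else Surj m (a - 1)) + 2 * Surj m a + Surj m (a + 1) := by
  rw [Nat.card_congr (chainEquivLevel (Fin m) a), card_fun_subset_image, compl_compl]
  rcases a with _ | a
  · simp [surj_zero hm, card_compl, sum_range_succ]
  · rw [card_compl, card_pair (Fin.last_pos).ne]
    simp [sum_range_succ]

theorem card_strictMono_chains_not_empty_univ {m : ℕ} (hm : 0 < m) (b : ℕ) :
    Nat.card {T : Fin b → Finset (Fin m) // StrictMono T ∧
        ∀ h : 0 < b, ¬(T ⟨0, h⟩ = ∅ ∧ T ⟨b - 1, by omega⟩ = Finset.univ)}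
      = 2 * Surj m b + Surj m (b + 1) := by
  rcases b with _ | b
  · rw [Nat.card_congr (Equiv.subtypeEquivRight fun T => and_iff_left fun h => absurd h
      (lt_irrefl 0)), card_strictMono_chains hm]
    simp
  set I : Finset (Fin (b + 2)) := {0, Fin.last (b + 1)}ᶜ
  have key (S : {S : Fin (b + 1) → Finset (Fin m) // StrictMono S}) :
      (∀ h : 0 < b + 1, ¬(S.1 ⟨0, h⟩ = ∅ ∧ S.1 ⟨b + 1 - 1, by omega⟩ = Finset.univ)) ↔
        ¬univ.image (chainEquivLevel (Fin m) (b + 1) S).1 = I :=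
    (forall_prop_of_true b.succ_pos).trans (not_congr (image_chainLevel_eq_compl_iff S.2).symm)
  have hT : Nat.card {T : Fin (b + 1) → Finset (Fin m) // StrictMono T ∧
        ∀ h : 0 < b + 1, ¬(T ⟨0, h⟩ = ∅ ∧ T ⟨b + 1 - 1, by omega⟩ = Finset.univ)}
      = Nat.card {g : {g : Fin m → Fin (b + 2) // I ⊆ univ.image g} // ¬univ.image g.1 = I} :=
    Nat.card_congr <| (Equiv.subtypeSubtypeEquivSubtypeInter _ _).symm.trans
      ((chainEquivLevel _ _).subtypeEquiv key)
  have hsplit := Nat.card_congr <| Equiv.sumCompl fun g :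
    {g : Fin m → Fin (b + 2) // I ⊆ univ.image g} => univ.image g.1 = I
  rw [Nat.card_sum, Nat.card_congr (Equiv.subtypeSubtypeEquivSubtype
    (p := fun g : Fin m → Fin (b + 2) => I ⊆ univ.image g) (q := fun g => univ.image g = I)
    fun h => h.symm.subset), card_fun_image_eq, ← Nat.card_congr (chainEquivLevel _ _),
    card_strictMono_chains hm] at hsplit
  have hI : #I = b := by
    rw [card_compl, card_pair (Fin.last_pos).ne, Fintype.card_fin]
    omega
  rw [hI, if_neg b.succ_ne_zero, Nat.add_sub_cancel] at hsplit
  rw [hT]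
  omega

/-- For `n ≥ 4` and `k ≥ 0`, the number of pairs `(S, T)` where
`S = (A₁ ⊊ ⋯ ⊊ A_α)` is a strictly increasing chain of subsets of an `(n-2)`-element set `X`
and `T = (A'₁ ⊊ ⋯ ⊊ A'_β)` is a strictly increasing chain of subsets of `X` with
`(A'₁, A'_β) ≠ (∅, X)`, with `α + β = k` and `α, β ≥ 0` (empty chains allowed), equals
`Σ_{α=0}^{k} B_α·C_{k-α}`, where `B_α = Surj(n-2,α-1) + 2·Surj(n-2,α) + Surj(n-2,α+1)`
(with `Surj(n-2,j) = 0` for `j < 0`) and `C_β = 2·Surj(n-2,β) + Surj(n-2,β+1)`.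
This is the number `f_{k-1}` of squarefree standard monomials of degree `k`, i.e. the number
of `(k-1)`-dimensional faces of the unimodular triangulation of `Cut(K_{2,n-2})` induced by
the quadratic Gröbner basis. -/
theorem face_numbers_cut_K2m (n : ℕ) (hn : 4 ≤ n) (k : ℕ) :
    Nat.card (Σ α : Fin (k + 1),
        {S : Fin (α : ℕ) → Finset (Fin (n - 2)) // StrictMono S} ×
        {T : Fin (k - (α : ℕ)) → Finset (Fin (n - 2)) // StrictMono T ∧
          ∀ h : 0 < k - (α : ℕ),
            ¬(T ⟨0, h⟩ = ∅ ∧ T ⟨k - (α : ℕ) - 1, by omega⟩ = Finset.univ)})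
      = ∑ α ∈ Finset.range (k + 1),
          ((if α = 0 then 0 else Surj (n - 2) (α - 1)) + 2 * Surj (n - 2) α +
              Surj (n - 2) (α + 1)) *
            (2 * Surj (n - 2) (k - α) + Surj (n - 2) (k - α + 1)) := by
  have hm : 0 < n - 2 := by omega
  simp only [Nat.card_sigma, Nat.card_prod, card_strictMono_chains hm,
    card_strictMono_chains_not_empty_univ hm, Finset.sum_range]
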